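/- arXiv:1103.6181 — 5 statements merged into one kernel-verified Lean document; each statement's English description precedes it below -/
import Mathlib

section
/- For 0 < λ < 2, the sequence defined by m₀ = 0 and m_{i+1} = 1/(λ - m_i) (defined while m_i < λ) is strictly increasing, and there exists some index i ≥ 1 with m_i ≥ λ; i.e., the sequence cannot be defined as an infinite sequence with all values in [0, λ). -/
/-!
Each step of `x ↦ 1/(λ - x)` on `[0, λ)` moves `x` up by at least `δ = (1 - λ²/4)/λ`, because
`1/(λ - x) - x = ((x - λ/2)² + 1 - λ²/4)/(λ - x)` and `λ - x ≤ λ`. For `λ < 2` this `δ` is positive,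
so a sequence staying in `[0, λ)` would grow past every bound.
-/

lemma add_le_one_div_sub {lam x : ℝ} (hlam : lam ≤ 2) (hx : 0 ≤ x) (hxl : x < lam) :
    x + (1 - lam ^ 2 / 4) / lam ≤ 1 / (lam - x) := by
  have hpos : 0 < lam := hx.trans_lt hxl
  have hδ : 0 ≤ (1 - lam ^ 2 / 4) / lam := div_nonneg (by nlinarith) hpos.le
  have hδlam : (1 - lam ^ 2 / 4) / lam * lam = 1 - lam ^ 2 / 4 := div_mul_cancel₀ _ hpos.ne'
  rw [le_div_iff₀ (sub_pos.mpr hxl)]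
  nlinarith [sq_nonneg (x - lam / 2), mul_nonneg hδ hx]

namespace InvSubRecurrence

variable {lam : ℝ} {m : ℕ → ℝ}

lemma nonneg_of_forall_lt (hm0 : m 0 = 0)
    (hrec : ∀ i, m i < lam → m (i + 1) = 1 / (lam - m i)) :
    ∀ i, (∀ j < i, m j < lam) → 0 ≤ m i
  | 0, _ => hm0.ge
  | i + 1, h => by
    rw [hrec i (h i i.lt_succ_self)]
    exact one_div_nonneg.mpr (sub_nonneg.mpr (h i i.lt_succ_self).le)

lemma add_le_succ_of_forall_lt (hlam : lam ≤ 2) (hm0 : m 0 = 0)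
    (hrec : ∀ i, m i < lam → m (i + 1) = 1 / (lam - m i)) {i : ℕ}
    (h : ∀ j ≤ i, m j < lam) : m i + (1 - lam ^ 2 / 4) / lam ≤ m (i + 1) := by
  have hi : m i < lam := h i le_rfl
  rw [hrec i hi]
  exact add_le_one_div_sub hlam (nonneg_of_forall_lt hm0 hrec i fun j hj => h j hj.le) hi

lemma natCast_mul_le_of_forall_lt (hlam : lam ≤ 2) (hm0 : m 0 = 0)
    (hrec : ∀ i, m i < lam → m (i + 1) = 1 / (lam - m i)) (h : ∀ i, m i < lam) (n : ℕ) :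
    n * ((1 - lam ^ 2 / 4) / lam) ≤ m n := by
  induction n with
  | zero => simp [hm0]
  | succ n ih =>
    have := add_le_succ_of_forall_lt hlam hm0 hrec (i := n) fun j _ => h j
    push_cast
    linarith

end InvSubRecurrence

open InvSubRecurrence

/-- The sequence `m₀ = 0`, `m_{i+1} = 1/(λ - m_i)` (defined while `m_i < λ`) is strictly
increasing while defined, and there is some index `i ≥ 1` with `m_i ≥ λ`. -/
theorem stmt_1 (lam : ℝ) (h1 : 0 < lam) (h2 : lam < 2) (m : ℕ → ℝ)
    (hm0 : m 0 = 0)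
    (hrec : ∀ i, m i < lam → m (i + 1) = 1 / (lam - m i)) :
    (∀ i, (∀ j ≤ i, m j < lam) → m i < m (i + 1)) ∧
      (∃ i, 1 ≤ i ∧ lam ≤ m i) := by
  have hδ : 0 < (1 - lam ^ 2 / 4) / lam := div_pos (by nlinarith) h1
  refine ⟨fun i h => by linarith [add_le_succ_of_forall_lt h2.le hm0 hrec h], ?_⟩
  by_contra! hbelow
  have hall : ∀ i, m i < lam
    | 0 => hm0 ▸ h1
    | i + 1 => hbelow (i + 1) i.succ_pos
  obtain ⟨n, hn⟩ := Archimedean.arch lam hδ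
  have := natCast_mul_le_of_forall_lt h2.le hm0 hrec hall n
  rw [nsmul_eq_mul] at hn
  linarith [hall n]
end

section
/- Let a₁, …, a_ℓ be positive integers and for 0 < λ < 2 define the alternating continued fraction F_ℓ(λ) = 1/(a₁λ − 1/(a₂λ − ⋯ − 1/(a_ℓλ))) (denoted ⟦a₁, …, a_ℓ⟧_λ), assuming all denominators appearing are positive. Then λ ↦ ⟦a₁, …, a_ℓ⟧_λ is a strictly decreasing function of λ on its domain of definition. -/
/-- The finite alternating `λ`-continued fraction `⟦a₁, …, a_ℓ⟧_λ`:
`cf λ [] = 0` and `cf λ (a :: l) = 1/(a·λ − cf λ l)`. -/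
noncomputable def cf (lam : ℝ) : List ℕ → ℝ
  | [] => 0
  | a :: l => 1 / (a * lam - cf lam l)

/-- All denominators occurring in `⟦a₁, …, a_ℓ⟧_λ` are positive. -/
def cfGood (lam : ℝ) : List ℕ → Prop
  | [] => True
  | a :: l => cfGood lam l ∧ 0 < a * lam - cf lam l

/-! Raising `λ` raises the head term `a₁λ` and, by induction, lowers the tail `⟦a₂, …, a_ℓ⟧_λ`,
so the outer denominator `a₁λ − ⟦a₂, …, a_ℓ⟧_λ` grows; it is positive, hence its reciprocal
`⟦a₁, …, a_ℓ⟧_λ` shrinks, strictly since `a₁ ≥ 1`. -/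

theorem cf_le_cf_of_le {lam lam' : ℝ} (hle : lam ≤ lam') :
    ∀ {l : List ℕ}, cfGood lam l → cf lam' l ≤ cf lam l
  | [], _ => le_rfl
  | a :: t, ⟨ht, hpos⟩ => by
    have htail : cf lam' t ≤ cf lam t := cf_le_cf_of_le hle ht
    have hhead : (a : ℝ) * lam ≤ a * lam' := by gcongr
    exact one_div_le_one_div_of_le hpos (by linarith)

theorem cf_cons_lt_cf_cons {lam lam' : ℝ} (hlt : lam < lam') {a : ℕ} (ha : 0 < a)
    {t : List ℕ} (g : cfGood lam (a :: t)) : cf lam' (a :: t) < cf lam (a :: t) := by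
  have htail : cf lam' t ≤ cf lam t := cf_le_cf_of_le hlt.le g.1
  have hhead : (a : ℝ) * lam < a * lam' := mul_lt_mul_of_pos_left hlt (Nat.cast_pos.mpr ha)
  exact one_div_lt_one_div_of_lt g.2 (by linarith)

theorem stmt_10_general (l : List ℕ) (hne : l ≠ []) (ha : ∀ a ∈ l, 1 ≤ a)
    (lam lam' : ℝ) (hlt : lam < lam')
    (g : cfGood lam l) :
    cf lam' l < cf lam l := by
  obtain ⟨a, t, rfl⟩ := List.exists_cons_of_ne_nil hne
  exact cf_cons_lt_cf_cons hlt (ha a List.mem_cons_self) g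

/-- For positive integers `a₁, …, a_ℓ` (`ℓ ≥ 1`), the map `λ ↦ ⟦a₁, …, a_ℓ⟧_λ` is
strictly decreasing on its domain of definition. -/
theorem stmt_10 (l : List ℕ) (hne : l ≠ []) (ha : ∀ a ∈ l, 1 ≤ a)
    (lam lam' : ℝ) (h0 : 0 < lam) (hlt : lam < lam') (h2 : lam' < 2)
    (g : cfGood lam l) (g' : cfGood lam' l) :
    cf lam' l < cf lam l :=
  stmt_10_general l hne ha lam lam' hlt g
end

section
/- For i ≥ 0 and a real number y ≥ 0 with finite alternating λ-continued fraction expansion y = ⟦b₁, …, b_ℓ⟧_λ, the value h_i(y), where h_i = h^i ∘ h₀ with h(t) = 1/(λ−t) and h₀(t) = t/(λt+1), has the expansion h_i(y) = ⟦1, 1, …, 1 (i ones), 1+b₁, b₂, …, b_ℓ⟧_λ, whenever both sides are well-defined. -/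
/-- The list `1, …, 1 (i ones), 1+b₁, b₂, …, b_ℓ` (just the `i` ones if `bs = []`). -/
def hiList (i : ℕ) (bs : List ℕ) : List ℕ :=
  List.replicate i 1 ++ (match bs with | [] => [] | b :: t => (b + 1) :: t)

/- Since `h(⟦a₁, …, a_ℓ⟧_λ) = ⟦1, a₁, …, a_ℓ⟧_λ`, the `i` iterates of `h` prepend `i` ones.
For `y = 1/d` with `d ≠ 0` one has `h₀(y) = 1/(λ + d)`, which turns the leading digit `b₁`
into `1 + b₁`. -/

theorem cf_one_cons (lam : ℝ) (l : List ℕ) : cf lam (1 :: l) = 1 / (lam - cf lam l) := by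
  simp [cf]

theorem iterate_cf (lam : ℝ) (i : ℕ) (l : List ℕ) :
    (fun t : ℝ => 1 / (lam - t))^[i] (cf lam l) = cf lam (List.replicate i 1 ++ l) := by
  induction i with
  | zero => rfl
  | succ n ih =>
    rw [Function.iterate_succ_apply', ih, List.replicate_succ, List.cons_append, cf_one_cons]

theorem one_div_div_mul_one_div_add_one {K : Type*} [Field K] (lam d : K) (hd : d ≠ 0) :
    1 / d / (lam * (1 / d) + 1) = 1 / (lam + d) := by
  rw [← one_div_div, mul_one_div, div_add_one hd, div_div_div_cancel_right₀ hd, div_one]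

theorem cf_div_mul_cf_add_one (lam : ℝ) (bs : List ℕ) (g : cfGood lam bs) :
    cf lam bs / (lam * cf lam bs + 1) = cf lam (hiList 0 bs) := by
  cases bs with
  | nil => simp [cf, hiList]
  | cons b t =>
    have hd : (b : ℝ) * lam - cf lam t ≠ 0 := g.2.ne'
    simp only [cf, hiList, List.replicate_zero, List.nil_append]
    rw [one_div_div_mul_one_div_add_one _ _ hd]
    push_cast
    ring

theorem stmt_11_general (lam : ℝ) (i : ℕ) (bs : List ℕ)
    (g : cfGood lam bs) :
    (fun t : ℝ => 1 / (lam - t))^[i] (cf lam bs / (lam * cf lam bs + 1)) =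
      cf lam (hiList i bs) := by
  rw [cf_div_mul_cf_add_one lam bs g, iterate_cf]
  rfl

/-- For `h(t) = 1/(λ−t)`, `h₀(t) = t/(λt+1)` and `h_i = h^i ∘ h₀`:
if `y = ⟦b₁, …, b_ℓ⟧_λ` then `h_i(y) = ⟦1, …, 1 (i ones), 1+b₁, b₂, …, b_ℓ⟧_λ`,
whenever both sides are well-defined. -/
theorem stmt_11 (lam : ℝ) (h1 : 0 < lam) (h2 : lam < 2) (i : ℕ) (bs : List ℕ)
    (hb : ∀ b ∈ bs, 1 ≤ b) (g : cfGood lam bs) (g' : cfGood lam (hiList i bs)) :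
    (fun t : ℝ => 1 / (lam - t))^[i] (cf lam bs / (lam * cf lam bs + 1)) =
      cf lam (hiList i bs) :=
  stmt_11_general lam i bs g
end

section
/- Let W = x₀⋯x_n be a lexicographically-shift-maximal (LSM) word of length n+1, i.e. a word over the nonnegative integers with x₀ > 0 and x_k x_{k+1} ⋯ x_n ⪯ x₀ x₁ ⋯ x_{n−k} (lexicographically) for all 0 ≤ k ≤ n. Let k be such that x_{k+1}⋯x_n is the longest strict suffix of W that is also a prefix of W. Then the successor of W (the minimal LSM word of length n+1 strictly greater than W in lexicographic order) exists and equals x₀⋯x_{k−1}(x_k + 1)0⋯0, padded with zeros to length n+1. -/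
namespace Stmt14

def d (l : List ℕ) (i : ℕ) : ℕ := l.getD i 0

lemma d_drop (l : List ℕ) (j m : ℕ) : d (l.drop j) m = d l (j + m) := by
  simp [d, List.getD_eq_getElem?_getD, List.getElem?_drop]

lemma d_take (l : List ℕ) {s m : ℕ} (h : m < s) : d (l.take s) m = d l m := by
  simp [d, List.getD_eq_getElem?_getD, List.getElem?_take, h]

lemma headI_eq_d (l : List ℕ) (h : l ≠ []) : l.headI = d l 0 := by
  cases l with
  | nil => simp at h
  | cons a t => rfl

lemma eq_of_d {a b : List ℕ} (hl : a.length = b.length)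
    (h : ∀ m < a.length, d a m = d b m) : a = b := by
  apply List.ext_getElem hl
  intro m h1 h2
  have := h m h1
  rwa [d, d, List.getD_eq_getElem a 0 h1, List.getD_eq_getElem b 0 h2] at this

lemma lex_of_d : ∀ {a b : List ℕ}, a.length = b.length → ∀ {i : ℕ}, i < a.length →
    (∀ m < i, d a m = d b m) → d a i < d b i → List.Lex (· < ·) a b := by
  intro a
  induction a with
  | nil => intro b _ i hi; simp at hi
  | cons x a ih =>
    intro b hl i hi hag hlt
    cases b with
    | nil => simp at hl
    | cons y b =>
      cases i with
      | zero => exact List.Lex.rel hlt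
      | succ i =>
        have hxy : x = y := hag 0 (Nat.succ_pos i)
        subst hxy
        exact List.Lex.cons (ih (by simpa using hl) (by simpa using hi)
          (fun m hm => hag (m+1) (by omega)) hlt)

lemma d_of_lex {a b : List ℕ} (hl : a.length = b.length) (h : List.Lex (· < ·) a b) :
    ∃ i < a.length, (∀ m < i, d a m = d b m) ∧ d a i < d b i := by
  induction h with
  | nil => simp at hl
  | @cons x l₁ l₂ h ih =>
    obtain ⟨i, hi, hag, hlt⟩ := ih (by simpa using hl)
    exact ⟨i + 1, by simpa using hi, fun m hm => by
      cases m with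
      | zero => rfl
      | succ m => exact hag m (by omega), hlt⟩
  | @rel x y l₁ l₂ h =>
    exact ⟨0, by simp, fun m hm => by omega, h⟩

lemma lex_or_eq_of_le : ∀ {a b : List ℕ}, a.length = b.length →
    (∀ m < a.length, d a m ≤ d b m) → List.Lex (· < ·) a b ∨ a = b := by
  intro a
  induction a with
  | nil => intro b hl _; exact Or.inr (by cases b <;> simp_all)
  | cons x a ih =>
    intro b hl h
    cases b with
    | nil => simp at hl
    | cons y b =>
      have h0 : x ≤ y := h 0 (by simp)
      rcases lt_or_eq_of_le h0 with hxy | hxy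
      · exact Or.inl (List.Lex.rel hxy)
      · subst hxy
        rcases ih (by simpa using hl) (fun m hm => h (m+1) (by simpa using hm)) with h' | h'
        · exact Or.inl (List.Lex.cons h')
        · exact Or.inr (by rw [h'])

lemma no_both (f g : ℕ → ℕ) (i i' : ℕ) (h1 : ∀ m < i, f m = g m) (h2 : g i < f i)
    (h3 : ∀ m < i', f m = g m) (h4 : f i' < g i') : False := by
  rcases lt_trichotomy i i' with h | h | h
  · have := h3 i h; omega
  · subst h; omega
  · have := h1 i' h; omega

lemma lsm_coord {l : List ℕ} {N : ℕ} (hlen : l.length = N + 1) {j : ℕ} (hj : j ≤ N)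
    (h : List.Lex (· < ·) (l.drop j) (l.take (l.length - j)) ∨ l.drop j = l.take (l.length - j)) :
    (∃ i < N + 1 - j, (∀ m < i, d l (j + m) = d l m) ∧ d l (j + i) < d l i) ∨
      (∀ m < N + 1 - j, d l (j + m) = d l m) := by
  have hdl : (l.drop j).length = N + 1 - j := by simp [hlen]
  have htl : (l.take (l.length - j)).length = N + 1 - j := by simp [hlen]
  rcases h with h | h
  · left
    obtain ⟨i, hi, hag, hlt⟩ := d_of_lex (by rw [hdl, htl]) h
    rw [hdl] at hi
    refine ⟨i, hi, fun m hm => ?_, ?_⟩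
    · have := hag m hm
      rwa [d_drop, d_take l (by omega : m < l.length - j)] at this
    · rwa [d_drop, d_take l (by omega : i < l.length - j)] at hlt
  · right
    intro m hm
    have : d (l.drop j) m = d (l.take (l.length - j)) m := by rw [h]
    rwa [d_drop, d_take l (by omega : m < l.length - j)] at this

lemma lsm_of_coord_le {l : List ℕ} {N : ℕ} (hlen : l.length = N + 1) {j : ℕ} (hj : j ≤ N)
    (h : ∀ m < N + 1 - j, d l (j + m) ≤ d l m) :
    List.Lex (· < ·) (l.drop j) (l.take (l.length - j)) ∨ l.drop j = l.take (l.length - j) := by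
  apply lex_or_eq_of_le
  · simp [hlen]
  · intro m hm
    have hm' : m < N + 1 - j := by simpa [hlen] using hm
    rw [d_drop, d_take l (by omega : m < l.length - j)]
    exact h m hm'

lemma lsm_of_coord_lt {l : List ℕ} {N : ℕ} (hlen : l.length = N + 1) {j : ℕ} (hj : j ≤ N)
    {i : ℕ} (hi : i < N + 1 - j) (hag : ∀ m < i, d l (j + m) = d l m)
    (hlt : d l (j + i) < d l i) :
    List.Lex (· < ·) (l.drop j) (l.take (l.length - j)) := by
  apply lex_of_d (by simp [hlen]) (i := i) (by simp [hlen]; omega)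
  · intro m hm
    rw [d_drop, d_take l (by omega : m < l.length - j)]
    exact hag m hm
  · rw [d_drop, d_take l (by omega : i < l.length - j)]
    exact hlt

end Stmt14


/-- A word `W = x₀⋯x_n` over the nonnegative integers is lexicographically shift
maximal (LSM) if `x₀ > 0` and every suffix `x_k⋯x_n` is lexicographically `≤` the
prefix `x₀⋯x_{n−k}` of the same length. -/
def IsLSM (W : List ℕ) : Prop :=
  W ≠ [] ∧ 0 < W.headI ∧
    ∀ k ≤ W.length - 1,
      List.Lex (· < ·) (W.drop k) (W.take (W.length - k)) ∨
        W.drop k = W.take (W.length - k)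

open Stmt14 in
/-- Successor in `LSM_n`: if `x_{k+1}⋯x_n` is the longest strict suffix of `W` which is
also a prefix of `W`, then the smallest LSM word of length `n+1` lexicographically
greater than `W` is `x₀⋯x_{k−1}(x_k+1)0⋯0` (read `(x₀+1)0⋯0` when `k = 0`). -/
theorem stmt_14 (n : ℕ) (W : List ℕ) (hlen : W.length = n + 1) (hW : IsLSM W)
    (k : ℕ) (hk : k ≤ n)
    (hpref : (W.drop (k + 1)).IsPrefix W)
    (hlongest : ∀ j, 1 ≤ j → j < k + 1 → ¬ (W.drop j).IsPrefix W) :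
    IsLSM (W.take k ++ (W.getD k 0 + 1) :: List.replicate (n - k) 0) ∧
      List.Lex (· < ·) W (W.take k ++ (W.getD k 0 + 1) :: List.replicate (n - k) 0) ∧
      ∀ U : List ℕ, U.length = n + 1 → IsLSM U → List.Lex (· < ·) W U →
        U = (W.take k ++ (W.getD k 0 + 1) :: List.replicate (n - k) 0) ∨
          List.Lex (· < ·) (W.take k ++ (W.getD k 0 + 1) :: List.replicate (n - k) 0) U := by
  obtain ⟨hWne, hWhead, hWlsm⟩ := hW
  set V := W.take k ++ (W.getD k 0 + 1) :: List.replicate (n - k) 0 with hV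
  have hTlen : (W.take k).length = k := by rw [List.length_take, hlen]; omega
  have hVlen : V.length = n + 1 := by
    rw [hV, List.length_append, hTlen, List.length_cons, List.length_replicate]; omega
  have hv_lt : ∀ m < k, d V m = d W m := by
    intro m hm
    show (W.take k ++ _).getD m 0 = _
    rw [List.getD_append _ _ _ m (by rw [hTlen]; exact hm)]
    exact d_take W hm
  have hv_k : d V k = d W k + 1 := by
    show (W.take k ++ _).getD k 0 = _
    rw [List.getD_append_right _ _ _ k (by rw [hTlen]), hTlen, Nat.sub_self,
      List.getD_cons_zero]
    rfl
  have hv_gt : ∀ m, k < m → d V m = 0 := by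
    intro m hm
    show (W.take k ++ _).getD m 0 = 0
    rw [List.getD_append_right _ _ _ m (by rw [hTlen]; omega), hTlen]
    obtain ⟨t, ht⟩ : ∃ t, m - k = t + 1 := ⟨m - k - 1, by omega⟩
    rw [ht, List.getD_cons_succ, List.getD_eq_getElem?_getD,
      List.getElem?_getD_replicate_default_eq]
  have per : ∀ m < n - k, d W (k + 1 + m) = d W m := by
    have hdrop : W.drop (k + 1) = W.take (n - k) := by
      have := List.prefix_iff_eq_take.mp hpref
      rwa [List.length_drop, hlen, show n + 1 - (k + 1) = n - k from by omega] at this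
    intro m hm
    have : d (W.drop (k + 1)) m = d (W.take (n - k)) m := by rw [hdrop]
    rwa [d_drop, d_take W hm] at this
  have hQ : ∀ j, 1 ≤ j → j ≤ k →
      ∃ i < n + 1 - j, (∀ m < i, d W (j + m) = d W m) ∧ d W (j + i) < d W i := by
    intro j h1 h2
    rcases lsm_coord hlen (by omega) (hWlsm j (by rw [hlen]; omega)) with h | h
    · exact h
    · exfalso
      apply hlongest j h1 (by omega)
      apply List.prefix_iff_eq_take.mpr
      apply eq_of_d
      · rw [List.length_take, List.length_drop, hlen]; omega
      · intro m hm
        rw [List.length_drop, hlen] at hm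
        rw [d_drop, d_take W (show m < (W.drop j).length by rw [List.length_drop, hlen]; omega)]
        exact h m (by omega)
  have hR : ∀ j i, 1 ≤ j → j ≤ k → i < n + 1 - j → (∀ m < i, d W (j + m) = d W m) →
      d W (j + i) < d W i → j + i ≤ k := by
    intro j i h1 h2 hi hag hlt
    by_contra hc
    push_neg at hc
    set q := k + 1 - j with hq
    have ha : ∀ t < i - q, d W (q + t) = d W t := by
      intro t ht
      have e1 : d W (j + (q + t)) = d W (q + t) := hag (q + t) (by omega)
      rw [show j + (q + t) = k + 1 + t from by omega] at e1
      have e2 : d W (k + 1 + t) = d W t := per t (by omega)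
      omega
    have hb : d W (i - q) < d W (q + (i - q)) := by
      have e3 : d W (k + 1 + (i - q)) = d W (i - q) := per (i - q) (by omega)
      rw [show k + 1 + (i - q) = j + i from by omega] at e3
      rw [show q + (i - q) = i from by omega]
      omega
    rcases lsm_coord hlen (show q ≤ n from by omega) (hWlsm q (by rw [hlen]; omega)) with
      ⟨i', hi', hag', hlt'⟩ | h
    · exact no_both (fun t => d W (q + t)) (fun t => d W t) (i - q) i' ha hb hag' hlt'
    · have := h (i - q) (by omega)
      omega
  have hVne : V ≠ [] := by
    intro h
    rw [h] at hVlen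
    simp at hVlen
  refine ⟨⟨hVne, ?_, ?_⟩, ?_, ?_⟩
  · -- head positive
    rw [headI_eq_d V hVne]
    rcases Nat.eq_zero_or_pos k with hk0 | hk0
    · have := hv_k
      rw [hk0] at this
      omega
    · rw [hv_lt 0 hk0, ← headI_eq_d W hWne]
      exact hWhead
  · -- LSM conditions for V
    intro j hj
    rw [hVlen] at hj
    have hjn : j ≤ n := by omega
    rcases Nat.eq_zero_or_pos j with hj0 | hj0
    · subst hj0
      right
      simp
    rcases le_or_gt j k with hjk | hjk
    · obtain ⟨i, hi, hag, hlt⟩ := hQ j hj0 hjk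
      have hik := hR j i hj0 hjk hi hag hlt
      rcases lt_or_eq_of_le hik with hik' | hik'
      · left
        apply lsm_of_coord_lt hVlen hjn hi
        · intro m hm
          rw [hv_lt (j + m) (by omega), hv_lt m (by omega)]
          exact hag m hm
        · rw [hv_lt (j + i) (by omega), hv_lt i (by omega)]
          exact hlt
      · apply lsm_of_coord_le hVlen hjn
        intro m hm
        rcases lt_trichotomy m i with hmi | hmi | hmi
        · rw [hv_lt (j + m) (by omega), hv_lt m (by omega)]
          exact le_of_eq (hag m hmi)
        · subst hmi
          have e1 : d V (j + m) = d W k + 1 := by rw [show j + m = k from hik']; exact hv_k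
          have e2 : d V m = d W m := hv_lt m (by omega)
          have e3 : d W (j + m) < d W m := hlt
          rw [show j + m = k from hik'] at e3
          omega
        · rw [hv_gt (j + m) (by omega)]
          exact Nat.zero_le _
    · apply lsm_of_coord_le hVlen hjn
      intro m hm
      rw [hv_gt (j + m) (by omega)]
      exact Nat.zero_le _
  · -- W < V
    apply lex_of_d (by rw [hlen, hVlen]) (i := k) (by rw [hlen]; omega)
    · intro m hm
      exact (hv_lt m hm).symm
    · rw [hv_k]
      omega
  · -- minimality
    intro U hUlen hUlsm hWU
    obtain ⟨t, ht, hag, hlt⟩ := d_of_lex (by rw [hlen, hUlen]) hWU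
    rw [hlen] at ht
    rcases lt_trichotomy t k with htk | htk | htk
    · right
      apply lex_of_d (by rw [hVlen, hUlen]) (i := t) (by rw [hVlen]; omega)
      · intro m hm
        rw [hv_lt m (by omega)]
        exact hag m hm
      · rw [hv_lt t htk]
        exact hlt
    · have hle : d W k + 1 ≤ d U k := by
        rw [← htk]
        omega
      rcases lt_or_eq_of_le hle with hlt2 | heq2
      · right
        apply lex_of_d (by rw [hVlen, hUlen]) (i := k) (by rw [hVlen]; omega)
        · intro m hm
          rw [hv_lt m hm]
          exact hag m (by omega)
        · rw [hv_k]
          exact hlt2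
      · have hpoint : ∀ m < V.length, d V m ≤ d U m := by
          intro m hm
          rw [hVlen] at hm
          rcases lt_trichotomy m k with hmk | hmk | hmk
          · rw [hv_lt m hmk]
            exact le_of_eq (hag m (by omega))
          · subst hmk
            rw [hv_k]
            omega
          · rw [hv_gt m hmk]
            exact Nat.zero_le _
        rcases lex_or_eq_of_le (show V.length = U.length by rw [hVlen, hUlen]) hpoint with h | h
        · exact Or.inr h
        · exact Or.inl h.symm
    · exfalso
      have hk1n : k + 1 ≤ n := by omega
      set m0 := t - (k + 1) with hm0
      have hm0n : m0 < n + 1 - (k + 1) := by omega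
      have h1 : ∀ m < m0, d U (k + 1 + m) = d U m := by
        intro m hm
        have e1 : d W (k + 1 + m) = d U (k + 1 + m) := hag (k + 1 + m) (by omega)
        have e2 : d W (k + 1 + m) = d W m := per m (by omega)
        have e3 : d W m = d U m := hag m (by omega)
        omega
      have h2 : d U m0 < d U (k + 1 + m0) := by
        have e1 : d W m0 = d U m0 := hag m0 (by omega)
        have e2 : d W (k + 1 + m0) = d W m0 := per m0 (by omega)
        rw [show k + 1 + m0 = t from by omega] at e2 ⊢
        omega
      rcases lsm_coord hUlen hk1n (hUlsm.2.2 (k + 1) (by rw [hUlen]; omega)) with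
        ⟨i', hi', hag', hlt'⟩ | h
      · exact no_both (fun m => d U (k + 1 + m)) (fun m => d U m) m0 i' h1 h2 hag' hlt'
      · have := h m0 hm0n
        omega
end

section
/- Let β > 1 with greedy expansion data: suppose the sequence O_β(1) := lim_{t→1⁻} of the digit sequences of t starts with digits k, j where k ≥ 2 is an integer and 0 ≤ j ≤ k. Then |β − (k + j/k)| ≤ 1/k. -/
/-- The greedy `β`-expansion map `S_β(t) = βt mod 1`. -/
noncomputable def betaMap (β : ℝ) (t : ℝ) : ℝ := Int.fract (β * t)

/-- The `n`-th digit of the greedy `β`-expansion of `t`. -/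
noncomputable def betaDigit (β : ℝ) (n : ℕ) (t : ℝ) : ℤ := ⌊β * (betaMap β)^[n] t⌋

open Filter Topology

/-!
Near `t = 1⁻` the first two digits are `⌊βt⌋ = k` and `⌊β(βt - k)⌋ = j`; letting `t → 1⁻`
gives `k ≤ β ≤ k + 1` and `j ≤ β(β - k) ≤ j + 1`. Since `0 ≤ β - k ≤ 1`, the quantity
`β(β - k) = k(β - k) + (β - k)²` differs from `k(β - k)` by at most `1`, so
`|k(β - k) - j| ≤ 1`, which is the claim after dividing by `k`.
-/

theorem Filter.Tendsto.mem_Icc_of_eventually_floor_eq {α R : Type*} [Ring R] [LinearOrder R]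
    [IsStrictOrderedRing R] [FloorRing R] [TopologicalSpace R] [OrderClosedTopology R]
    {l : Filter α} [l.NeBot] {f : α → R} {x : R} {m : ℤ} (hf : Tendsto f l (𝓝 x))
    (hm : ∀ᶠ a in l, ⌊f a⌋ = m) : x ∈ Set.Icc (m : R) (m + 1) :=
  isClosed_Icc.mem_of_tendsto hf <| hm.mono fun _ ha =>
    ⟨(Int.floor_eq_iff.mp ha).1, (Int.floor_eq_iff.mp ha).2.le⟩

theorem betaDigit_one_of_betaDigit_zero {β t : ℝ} {k : ℤ} (h : betaDigit β 0 t = k) :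
    betaDigit β 1 t = ⌊β * (β * t - k)⌋ := by
  have hfloor : ⌊β * t⌋ = k := h
  rw [betaDigit, Function.iterate_one, betaMap, ← Int.self_sub_floor, hfloor]

theorem abs_sub_add_div_le_one_div {k j β : ℝ} (hk : 0 < k) (hkβ : k ≤ β) (hβk : β ≤ k + 1)
    (hj : j ≤ β * (β - k)) (hj' : β * (β - k) ≤ j + 1) : |β - (k + j / k)| ≤ 1 / k := by
  have hupper : k * (β - k) - j ≤ 1 := by nlinarith
  have hlower : -1 ≤ k * (β - k) - j := by nlinarith
  have hrewrite : β - (k + j / k) = (k * (β - k) - j) / k := by field_simp; ring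
  rw [hrewrite, abs_div, abs_of_pos hk, div_le_div_iff_of_pos_right hk]
  exact abs_le.mpr ⟨hlower, hupper⟩

theorem stmt_17_general (β : ℝ) (k j : ℕ) (hk : 2 ≤ k)
    (h0 : ∀ᶠ t in nhdsWithin (1 : ℝ) (Set.Iio 1), betaDigit β 0 t = (k : ℤ))
    (h1 : ∀ᶠ t in nhdsWithin (1 : ℝ) (Set.Iio 1), betaDigit β 1 t = (j : ℤ)) :
    |β - ((k : ℝ) + (j : ℝ) / (k : ℝ))| ≤ 1 / (k : ℝ) := by
  have hlim : ∀ g : ℝ → ℝ, Continuous g → Tendsto g (𝓝[<] 1) (𝓝 (g 1)) :=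
    fun g hg => (hg.tendsto 1).mono_left nhdsWithin_le_nhds
  have h1' : ∀ᶠ t in 𝓝[<] 1, ⌊β * (β * t - k)⌋ = (j : ℤ) := by
    filter_upwards [h0, h1] with t ht0 ht1
    rwa [betaDigit_one_of_betaDigit_zero ht0] at ht1
  obtain ⟨hkβ, hβk⟩ :=
    (hlim (fun t => β * t) (by fun_prop)).mem_Icc_of_eventually_floor_eq h0
  obtain ⟨hj, hj'⟩ :=
    (hlim (fun t => β * (β * t - k)) (by fun_prop)).mem_Icc_of_eventually_floor_eq h1'
  push_cast at hkβ hβk hj hj'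
  simp only [mul_one] at hkβ hβk hj hj'
  exact abs_sub_add_div_le_one_div (Nat.cast_pos.mpr (by omega)) hkβ hβk hj hj'

/-- If `β > 1` and the sequence `O_β(1) = lim_{t→1⁻} O_β(t)` starts with digits `k j`,
where `k ≥ 2` is an integer and `0 ≤ j ≤ k`, then `|β − (k + j/k)| ≤ 1/k`. -/
theorem stmt_17 (β : ℝ) (hβ : 1 < β) (k j : ℕ) (hk : 2 ≤ k) (hj : j ≤ k)
    (h0 : ∀ᶠ t in nhdsWithin (1 : ℝ) (Set.Iio 1), betaDigit β 0 t = (k : ℤ))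
    (h1 : ∀ᶠ t in nhdsWithin (1 : ℝ) (Set.Iio 1), betaDigit β 1 t = (j : ℤ)) :
    |β - ((k : ℝ) + (j : ℝ) / (k : ℝ))| ≤ 1 / (k : ℝ) :=
  stmt_17_general β k j hk h0 h1
end
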